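/- arXiv:1408.0649 — 9 statements merged into one kernel-verified Lean document; each statement's English description precedes it below -/
import Mathlib

section
/- Let G be a connected graph of order at least three. If {u,v} is a weak total resolving set for G of minimum cardinality (a weak total metric basis), then u and v are not adjacent. -/
open SimpleGraph

variable {V : Type*}

/-- `W` is a resolving set: every pair of distinct vertices is resolved by some `w ∈ W`. -/
def IsResolvingSet (G : SimpleGraph V) (W : Finset V) : Prop :=
  ∀ u v : V, u ≠ v → ∃ w ∈ W, G.dist u w ≠ G.dist v w

/-- `W` is a weak total resolving set. -/
def IsWTRSet (G : SimpleGraph V) (W : Finset V) : Prop :=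
  IsResolvingSet G W ∧
    ∀ v ∈ W, ∀ u : V, u ∉ W → ∃ w ∈ W, w ≠ v ∧ G.dist u w ≠ G.dist v w

/-- `u` and `v` are twin vertices. -/
def AreTwins (G : SimpleGraph V) (u v : V) : Prop :=
  u ≠ v ∧ G.neighborSet u \ {v} = G.neighborSet v \ {u}

/-- Metric dimension. -/
noncomputable def metricDim (G : SimpleGraph V) : ℕ :=
  sInf {k | ∃ W : Finset V, W.card = k ∧ IsResolvingSet G W}

/-- Weak total metric dimension. -/
noncomputable def wtDim (G : SimpleGraph V) : ℕ :=
  sInf {k | ∃ W : Finset V, W.card = k ∧ IsWTRSet G W}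

/-- Weak total resolving number: least `r` such that every `r`-subset is a WTR-set. -/
noncomputable def resWt (G : SimpleGraph V) : ℕ :=
  sInf {r | ∀ W : Finset V, W.card = r → IsWTRSet G W}

/- If `u` and `v` are adjacent, the weak total condition at `v` says that every
vertex `x` outside `{u, v}` has `d(x, u) ≠ d(v, u) = 1`, and symmetrically `d(x, v) ≠ 1`.
So no edge leaves `{u, v}`, which contradicts connectedness once there is a third vertex. -/

namespace SimpleGraph

theorem Preconnected.exists_adj_mem_notMem {G : SimpleGraph V} (hG : G.Preconnected)
    {S : Set V} {a b : V} (ha : a ∈ S) (hb : b ∉ S) : ∃ x ∈ S, ∃ y ∉ S, G.Adj x y := by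
  obtain ⟨p⟩ := hG a b
  obtain ⟨d, -, hd, hd'⟩ := p.exists_boundary_dart S ha hb
  exact ⟨d.fst, hd, d.snd, hd', d.adj⟩

end SimpleGraph

theorem IsWTRSet.dist_ne_of_pair [DecidableEq V] {G : SimpleGraph V} {u v x : V}
    (hW : IsWTRSet G {u, v}) (hx : x ∉ ({u, v} : Finset V)) : G.dist x u ≠ G.dist v u := by
  obtain ⟨w, hw, hwv, hd⟩ := hW.2 v (by simp) x hx
  obtain rfl : w = u := by simpa [hwv] using hw
  exact hd

theorem IsWTRSet.not_adj_of_adj_pair [DecidableEq V] {G : SimpleGraph V} {u v x : V}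
    (hW : IsWTRSet G {u, v}) (huv : G.Adj u v) (hx : x ∉ ({u, v} : Finset V)) :
    ¬ G.Adj u x ∧ ¬ G.Adj v x := by
  have hW' : IsWTRSet G {v, u} := Finset.pair_comm u v ▸ hW
  simp only [← dist_eq_one_iff_adj, dist_comm (v := x)]
  constructor
  · rw [← dist_eq_one_iff_adj.2 huv.symm]
    exact hW.dist_ne_of_pair hx
  · rw [← dist_eq_one_iff_adj.2 huv]
    exact hW'.dist_ne_of_pair (by rwa [Finset.pair_comm])

theorem wtmb_pair_not_adjacent_general [Fintype V] [DecidableEq V] (G : SimpleGraph V) (hG : G.Connected)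
    (hn : 3 ≤ Fintype.card V) (u v : V)
    (hW : IsWTRSet G {u, v}) :
    ¬ G.Adj u v := by
  intro huv
  have hcard : ({u, v} : Finset V).card < (Finset.univ : Finset V).card :=
    Finset.card_le_two.trans_lt (by rwa [Finset.card_univ])
  obtain ⟨z, -, hz⟩ := Finset.exists_mem_notMem_of_card_lt_card hcard
  obtain ⟨x, hx, y, hy, hxy⟩ :=
    hG.preconnected.exists_adj_mem_notMem (S := ↑({u, v} : Finset V)) (a := u) (by simp) hz
  have hout := hW.not_adj_of_adj_pair huv hy
  rcases (by simpa using hx : x = u ∨ x = v) with rfl | rfl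
  exacts [hout.1 hxy, hout.2 hxy]

/-- if `{u,v}` is a weak total metric basis of a connected graph of order ≥ 3,
then `u` and `v` are not adjacent. -/
theorem wtmb_pair_not_adjacent [Fintype V] [DecidableEq V] (G : SimpleGraph V) (hG : G.Connected)
    (hn : 3 ≤ Fintype.card V) (u v : V) (huv : u ≠ v)
    (hW : IsWTRSet G {u, v})
    (hmin : ∀ W : Finset V, IsWTRSet G W → ({u, v} : Finset V).card ≤ W.card) :
    ¬ G.Adj u v :=
  wtmb_pair_not_adjacent_general G hG hn u v hW
end

section
/- If {u,v} is a weak total resolving set for a connected graph G, then both u and v have degree at most two in G. -/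
open SimpleGraph

variable {V : Type*}

/-!
Every neighbour `x` of `u` is at distance one from `u`, so only `v` can resolve two of them:
`x ↦ d(x, v)` is injective on `N(u)`. A neighbour `x ≠ v` lies outside `{u, v}`, so the total
condition at `u` forces `d(x, v) ≠ d(u, v)`; since `d(x, v)` differs from `d(u, v)` by at most
one, `d(x, v) = d(u, v) ± 1`, which also holds for `x = v` when `v ∼ u`. Hence `|N(u)| ≤ 2`.
-/

namespace IsResolvingSet

variable {G : SimpleGraph V} {u v : V} [DecidableEq V]

theorem injOn_dist_of_dist_eq (hW : IsResolvingSet G {u, v}) (k : ℕ) :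
    Set.InjOn (G.dist · v) {x | G.dist x u = k} := by
  intro x hx y hy hxy
  by_contra hne
  obtain ⟨w, hw, hdist⟩ := hW x y hne
  rcases Finset.mem_insert.mp hw with rfl | hw
  · exact hdist (hx.trans hy.symm)
  · rw [Finset.mem_singleton.mp hw] at hdist
    exact hdist hxy

theorem injOn_dist_neighborSet (hW : IsResolvingSet G {u, v}) :
    Set.InjOn (G.dist · v) (G.neighborSet u) :=
  (hW.injOn_dist_of_dist_eq 1).mono fun _ hx => dist_eq_one_iff_adj.mpr (G.adj_symm hx)

end IsResolvingSet

namespace IsWTRSet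

variable {G : SimpleGraph V} {u v x : V} [DecidableEq V]

theorem dist_ne_of_notMem (hW : IsWTRSet G {u, v}) (hx : x ∉ ({u, v} : Finset V)) :
    G.dist x v ≠ G.dist u v := by
  obtain ⟨w, hw, hwu, hdist⟩ := hW.2 u (Finset.mem_insert_self u {v}) x hx
  obtain rfl : w = v := by simpa [hwu] using hw
  exact hdist

theorem dist_mem_of_adj (hW : IsWTRSet G {u, v}) (hx : G.Adj u x) :
    G.dist x v ∈ ({G.dist u v - 1, G.dist u v + 1} : Finset ℕ) := by
  by_cases hxv : x = v
  · subst hxv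
    simp [dist_eq_one_iff_adj.mpr hx]
  · have hne := hW.dist_ne_of_notMem (x := x) (by simp [hx.ne', hxv])
    have hstep := hx.diff_dist_adj (u := v)
    rw [dist_comm (u := v), dist_comm (u := v)] at hstep
    simp only [Finset.mem_insert, Finset.mem_singleton]
    omega

theorem degree_le_two [Fintype V] [DecidableRel G.Adj] (hW : IsWTRSet G {u, v}) :
    G.degree u ≤ 2 :=
  calc G.degree u = (G.neighborFinset u).card := (G.card_neighborFinset_eq_degree u).symm
    _ ≤ ({G.dist u v - 1, G.dist u v + 1} : Finset ℕ).card :=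
      Finset.card_le_card_of_injOn _
        (fun _ hx => hW.dist_mem_of_adj ((G.mem_neighborFinset u _).mp hx))
        (by simpa using hW.1.injOn_dist_neighborSet)
    _ ≤ 2 := Finset.card_le_two

end IsWTRSet

theorem wtr_pair_degree_le_two_general [Fintype V] [DecidableEq V] (G : SimpleGraph V) [DecidableRel G.Adj]
    (u v : V) (hW : IsWTRSet G {u, v}) :
    G.degree u ≤ 2 ∧ G.degree v ≤ 2 :=
  ⟨hW.degree_le_two, (Finset.pair_comm u v ▸ hW).degree_le_two⟩

/-- if `{u,v}` is a WTR-set, then `u` and `v` have degree at most two. -/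
theorem wtr_pair_degree_le_two [Fintype V] [DecidableEq V] (G : SimpleGraph V) [DecidableRel G.Adj]
    (hG : G.Connected) (u v : V) (huv : u ≠ v) (hW : IsWTRSet G {u, v}) :
    G.degree u ≤ 2 ∧ G.degree v ≤ 2 :=
  wtr_pair_degree_le_two_general G u v hW
end

section
/- If {u,v} is a weak total resolving set for a connected graph G, then there is a unique shortest path between u and v in G. -/
open SimpleGraph

variable {V : Type*}

namespace SimpleGraph.Walk

variable {G : SimpleGraph V} {u v : V}

lemma dist_start_getVert_of_length_eq_dist {p : G.Walk u v} (hp : p.length = G.dist u v)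
    (i : ℕ) : G.dist u (p.getVert i) = min i (G.dist u v) := by
  rw [← length_eq_dist_of_subwalk hp (p.isSubwalk_take i), take_length, hp]

lemma dist_getVert_end_of_length_eq_dist {p : G.Walk u v} (hp : p.length = G.dist u v)
    (i : ℕ) : G.dist (p.getVert i) v = G.dist u v - i := by
  rw [← length_eq_dist_of_subwalk hp (p.isSubwalk_drop i), drop_length, hp]

end SimpleGraph.Walk

lemma IsResolvingSet.eq_of_forall_dist_eq {G : SimpleGraph V} {W : Finset V}
    (hW : IsResolvingSet G W) {x y : V} (h : ∀ w ∈ W, G.dist x w = G.dist y w) : x = y := by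
  by_contra hxy
  obtain ⟨w, hw, hne⟩ := hW x y hxy
  exact hne (h w hw)

/-- At every step `i`, two shortest `u`-`v` walks visit vertices with the same distances to `u`
and to `v`, which the resolving set `{u, v}` forces to coincide. -/
lemma IsResolvingSet.walk_eq_of_length_eq_dist [DecidableEq V] {G : SimpleGraph V} {u v : V}
    (hW : IsResolvingSet G {u, v}) {p q : G.Walk u v} (hp : p.length = G.dist u v)
    (hq : q.length = G.dist u v) : p = q := by
  refine Walk.ext_getVert fun i ↦ hW.eq_of_forall_dist_eq ?_
  simp only [Finset.mem_insert, Finset.mem_singleton, forall_eq_or_imp, forall_eq]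
  constructor
  · rw [dist_comm, dist_comm (u := q.getVert i), Walk.dist_start_getVert_of_length_eq_dist hp,
      Walk.dist_start_getVert_of_length_eq_dist hq]
  · rw [Walk.dist_getVert_end_of_length_eq_dist hp, Walk.dist_getVert_end_of_length_eq_dist hq]

theorem wtr_pair_unique_geodesic_general [DecidableEq V] (G : SimpleGraph V)
    (u v : V) (hW : IsWTRSet G {u, v}) :
    ∀ p q : G.Walk u v, p.IsPath → q.IsPath →
      p.length = G.dist u v → q.length = G.dist u v → p = q :=
  fun _ _ _ _ hp hq ↦ hW.1.walk_eq_of_length_eq_dist hp hq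

/-- if `{u,v}` is a WTR-set, then the shortest `u-v` path is unique. -/
theorem wtr_pair_unique_geodesic [Fintype V] [DecidableEq V] (G : SimpleGraph V) (hG : G.Connected)
    (u v : V) (huv : u ≠ v) (hW : IsWTRSet G {u, v}) :
    ∀ p q : G.Walk u v, p.IsPath → q.IsPath →
      p.length = G.dist u v → q.length = G.dist u v → p = q :=
  wtr_pair_unique_geodesic_general G u v hW
end

section
/- If {u,v} is a weak total resolving set for a connected graph G, then every neighbor of u (and of v) has degree at most three in G. -/
open SimpleGraph

variable {V : Type*}

/-! Write `k = d(u, v)`. Resolvability makes `y ↦ (d(y, u), d(y, v))` injective, and the weak total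
condition says that no vertex outside `{u, v}` lies at distance `k` from `u` or from `v`. Two
neighbours of `u` outside `{u, v}` have their distance to `v` in `{k - 1, k + 1}`; if they were
adjacent these distances would be equal, and so would their distance vectors. Hence every neighbour
`y ≠ u` of a neighbour `x ∉ {u, v}` of `u` has `d(y, u) = 2`, and `d(y, v)` ranges over
`[d(x, v) - 1, d(x, v) + 1] \ {k}`, at most two values since `|d(x, v) - k| ≤ 1`. When `x = v` we have
`k = 1`, and `u` is the only neighbour of `v`. -/

lemma SimpleGraph.Adj.dist_le_dist_add_one {G : SimpleGraph V} {x y : V} (h : G.Adj x y) (z : V) :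
    G.dist x z ≤ G.dist y z + 1 := by
  rw [dist_comm, dist_comm (u := y)]
  rcases h.symm.diff_dist_adj (u := z) with h | h | h <;> omega

section

variable [DecidableEq V] {G : SimpleGraph V} {u v x y : V}

lemma IsResolvingSet.eq_of_dist_eq (hW : IsResolvingSet G {u, v})
    (hu : G.dist x u = G.dist y u) (hv : G.dist x v = G.dist y v) : x = y := by
  by_contra hxy
  obtain ⟨w, hw, hne⟩ := hW x y hxy
  rcases Finset.mem_insert.1 hw with rfl | hw
  · exact hne hu
  · rw [Finset.mem_singleton.1 hw] at hne
    exact hne hv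

namespace IsWTRSet

lemma swap (hW : IsWTRSet G {u, v}) : IsWTRSet G {v, u} := by
  rwa [Finset.pair_comm]

lemma dist_ne_dist (hW : IsWTRSet G {u, v}) (hyu : y ≠ u) (hyv : y ≠ v) :
    G.dist y v ≠ G.dist u v := by
  obtain ⟨w, hw, hwu, hne⟩ := hW.2 u (by simp) y (by simp [hyu, hyv])
  obtain rfl : w = v := by simpa [hwu] using hw
  exact hne

lemma neighborFinset_subset_of_adj [Fintype (G.neighborSet v)] (hW : IsWTRSet G {u, v})
    (huv : G.Adj u v) : G.neighborFinset v ⊆ {u} := by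
  intro y hy
  rw [mem_neighborFinset] at hy
  by_contra hyu
  refine hW.dist_ne_dist (Finset.mem_singleton.not.1 hyu) hy.ne' ?_
  rw [dist_eq_one_iff_adj.2 hy.symm, dist_eq_one_iff_adj.2 huv]

lemma not_adj_of_adj (hW : IsWTRSet G {u, v}) (hx : G.Adj u x) (hxv : x ≠ v) : ¬G.Adj u v := by
  intro huv
  refine hW.swap.dist_ne_dist hxv hx.ne' ?_
  rw [dist_eq_one_iff_adj.2 hx.symm, dist_eq_one_iff_adj.2 huv.symm]

lemma not_adj_of_adj_of_adj (hW : IsWTRSet G {u, v}) (hx : G.Adj u x) (hy : G.Adj u y)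
    (hxv : x ≠ v) (hyv : y ≠ v) : ¬G.Adj x y := by
  intro hxy
  refine hxy.ne (hW.1.eq_of_dist_eq ?_ ?_)
  · rw [dist_eq_one_iff_adj.2 hx.symm, dist_eq_one_iff_adj.2 hy.symm]
  · have := hW.dist_ne_dist hx.ne' hxv
    have := hW.dist_ne_dist hy.ne' hyv
    have := hx.dist_le_dist_add_one v
    have := hx.symm.dist_le_dist_add_one v
    have := hy.dist_le_dist_add_one v
    have := hy.symm.dist_le_dist_add_one v
    have := hxy.dist_le_dist_add_one v
    have := hxy.symm.dist_le_dist_add_one v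
    omega

lemma dist_eq_two (hW : IsWTRSet G {u, v}) (hx : G.Adj u x) (hxv : x ≠ v) (hy : G.Adj x y)
    (hyu : y ≠ u) : G.dist y u = 2 := by
  have hpos : 0 < G.dist y u := (hy.symm.reachable.trans hx.symm.reachable).pos_dist_of_ne hyu
  have hle : G.dist y u ≤ 2 := by
    simpa [dist_eq_one_iff_adj.2 hx.symm] using hy.symm.dist_le_dist_add_one u
  have hne : G.dist y u ≠ 1 := by
    intro hyu_adj
    rw [dist_eq_one_iff_adj] at hyu_adj
    have hyv : y ≠ v := by
      rintro rfl
      exact hW.not_adj_of_adj hx hxv hyu_adj.symm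
    exact hW.not_adj_of_adj_of_adj hx hyu_adj.symm hxv hyv hy
  omega

lemma card_neighborFinset_erase_le_two [Fintype (G.neighborSet x)] (hW : IsWTRSet G {u, v})
    (hx : G.Adj u x) (hxv : x ≠ v) : ((G.neighborFinset x).erase u).card ≤ 2 := by
  set c := G.dist x v
  set k := G.dist u v
  have hmaps : Set.MapsTo (G.dist · v) ((G.neighborFinset x).erase u)
      ((Finset.Icc (c - 1) (c + 1)).erase k) := by
    intro y hy
    obtain ⟨hy, hyu⟩ : G.Adj x y ∧ y ≠ u := by simpa using hy
    have hyk : G.dist y v ≠ k := by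
      rcases eq_or_ne y v with rfl | hyv
      · have := hW.dist_eq_two hx hxv hy hyu
        rw [SimpleGraph.dist_comm] at this
        simp [k, this]
      · exact hW.dist_ne_dist hyu hyv
    have := hy.dist_le_dist_add_one v
    have := hy.symm.dist_le_dist_add_one v
    simp only [Finset.coe_erase, Finset.coe_Icc, Set.mem_sdiff, Set.mem_Icc,
      Set.mem_singleton_iff]
    omega
  have hinj : Set.InjOn (G.dist · v) ((G.neighborFinset x).erase u) := by
    intro y hy z hz hyz
    obtain ⟨hy, hyu⟩ : G.Adj x y ∧ y ≠ u := by simpa using hy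
    obtain ⟨hz, hzu⟩ : G.Adj x z ∧ z ≠ u := by simpa using hz
    refine hW.1.eq_of_dist_eq ?_ hyz
    rw [hW.dist_eq_two hx hxv hy hyu, hW.dist_eq_two hx hxv hz hzu]
  have hk : k ∈ Finset.Icc (c - 1) (c + 1) := by
    have := hx.dist_le_dist_add_one v
    have := hx.symm.dist_le_dist_add_one v
    rw [Finset.mem_Icc]
    omega
  calc ((G.neighborFinset x).erase u).card
      ≤ ((Finset.Icc (c - 1) (c + 1)).erase k).card := Finset.card_le_card_of_injOn _ hmaps hinj
    _ = (c + 1 + 1 - (c - 1)) - 1 := by rw [Finset.card_erase_of_mem hk, Nat.card_Icc]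
    _ ≤ 2 := by omega

lemma degree_le_three_of_adj [Fintype (G.neighborSet x)] (hW : IsWTRSet G {u, v})
    (hx : G.Adj u x) : G.degree x ≤ 3 := by
  rw [← card_neighborFinset_eq_degree]
  rcases eq_or_ne x v with rfl | hxv
  · exact (Finset.card_le_card (hW.neighborFinset_subset_of_adj hx)).trans (by simp)
  · rw [← Finset.card_erase_add_one ((mem_neighborFinset _ _ _).2 hx.symm)]
    have := hW.card_neighborFinset_erase_le_two hx hxv
    omega

end IsWTRSet

end

theorem wtr_pair_neighbor_degree_le_three_general [Fintype V] [DecidableEq V]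
    (G : SimpleGraph V) [DecidableRel G.Adj]
    (u v : V) (hW : IsWTRSet G {u, v}) :
    ∀ x : V, (G.Adj u x ∨ G.Adj v x) → G.degree x ≤ 3 := by
  rintro x (hx | hx)
  · exact hW.degree_le_three_of_adj hx
  · exact hW.swap.degree_le_three_of_adj hx

/-- if `{u,v}` is a WTR-set, every neighbor of `u` or `v` has degree ≤ 3. -/
theorem wtr_pair_neighbor_degree_le_three [Fintype V] [DecidableEq V]
    (G : SimpleGraph V) [DecidableRel G.Adj] (hG : G.Connected)
    (u v : V) (huv : u ≠ v) (hW : IsWTRSet G {u, v}) :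
    ∀ x : V, (G.Adj u x ∨ G.Adj v x) → G.degree x ≤ 3 :=
  wtr_pair_neighbor_degree_le_three_general G u v hW
end

section
/- If {u,v} is a weak total resolving set for a connected graph G, then for any z adjacent to u and any r adjacent to z with r ≠ u, r is not adjacent to u; similarly with v in place of u. In other words, u and v lie on no triangle. -/
open SimpleGraph

variable {V : Type*}

/- Distances to `v` from the three vertices of a triangle take at most two consecutive values, so
a triangle `u z r` would contain two vertices at equal distance from `v`. Either these are `z` and
`r`, which are also both at distance `1` from `u` and hence unresolved, or `u` and some `x`; then
`x ≠ v` by connectedness, and `v` fails to separate `x ∉ {u, v}` from `u`. -/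
theorem SimpleGraph.dist_eq_of_triangle {G : SimpleGraph V} {a b c : V} (hab : G.Adj a b)
    (hbc : G.Adj b c) (hca : G.Adj c a) (w : V) :
    G.dist a w = G.dist b w ∨ G.dist a w = G.dist c w ∨ G.dist b w = G.dist c w := by
  simp only [dist_comm (v := w)]
  have := hab.diff_dist_adj (u := w)
  have := hbc.diff_dist_adj (u := w)
  have := hca.diff_dist_adj (u := w)
  omega

section Pair

variable [DecidableEq V] {G : SimpleGraph V} {u v : V}

theorem IsResolvingSet.dist_ne_of_dist_eq {x y : V} (hW : IsResolvingSet G {u, v})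
    (hxy : x ≠ y) (hu : G.dist x u = G.dist y u) : G.dist x v ≠ G.dist y v := by
  obtain ⟨w, hw, hne⟩ := hW x y hxy
  simp only [Finset.mem_insert, Finset.mem_singleton] at hw
  rcases hw with rfl | rfl
  · exact absurd hu hne
  · exact hne

theorem IsWTRSet.dist_ne_dist_s9 {x : V} (hG : G.Connected) (hW : IsWTRSet G {u, v})
    (hxu : x ≠ u) : G.dist x v ≠ G.dist u v := by
  by_cases hxv : x = v
  · subst hxv
    rw [dist_self]
    exact (hG.pos_dist_of_ne hxu.symm).ne
  · obtain ⟨w, hw, hwu, hne⟩ := hW.2 u (by simp) x (by simp [hxu, hxv])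
    simp only [Finset.mem_insert, Finset.mem_singleton, hwu, false_or] at hw
    exact hw ▸ hne

theorem IsWTRSet.not_adj_of_adj_of_adj_s9 {z r : V} (hG : G.Connected) (hW : IsWTRSet G {u, v})
    (huz : G.Adj u z) (hzr : G.Adj z r) : ¬G.Adj r u := by
  intro hru
  rcases dist_eq_of_triangle huz hzr hru v with h | h | h
  · exact hW.dist_ne_dist_s9 hG huz.ne' h.symm
  · exact hW.dist_ne_dist_s9 hG hru.ne h.symm
  · refine hW.1.dist_ne_of_dist_eq hzr.ne ?_ h
    rw [dist_eq_one_iff_adj.2 huz.symm, dist_eq_one_iff_adj.2 hru]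

end Pair

theorem wtr_pair_no_triangle_general [DecidableEq V] (G : SimpleGraph V)
    (hG : G.Connected) (u v : V) (hW : IsWTRSet G {u, v}) :
    (∀ z r : V, G.Adj u z → G.Adj z r → r ≠ u → ¬ G.Adj r u) ∧
    (∀ z r : V, G.Adj v z → G.Adj z r → r ≠ v → ¬ G.Adj r v) := by
  refine ⟨fun z r huz hzr _ => hW.not_adj_of_adj_of_adj_s9 hG huz hzr, fun z r hvz hzr _ => ?_⟩
  rw [Finset.pair_comm] at hW
  exact hW.not_adj_of_adj_of_adj_s9 hG hvz hzr

/-- if `{u,v}` is a WTR-set, then `u` and `v` lie on no triangle. -/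
theorem wtr_pair_no_triangle [Fintype V] [DecidableEq V] (G : SimpleGraph V)
    (hG : G.Connected) (u v : V) (huv : u ≠ v) (hW : IsWTRSet G {u, v}) :
    (∀ z r : V, G.Adj u z → G.Adj z r → r ≠ u → ¬ G.Adj r u) ∧
    (∀ z r : V, G.Adj v z → G.Adj z r → r ≠ v → ¬ G.Adj r v) :=
  wtr_pair_no_triangle_general G hG u v hW
end

section
/- A connected graph G of order n ≥ 2 satisfies dim_wt(G) = n if and only if every vertex of G is a twin (i.e., for every vertex u there exists v ≠ u with N(u)−{v} = N(v)−{u}). -/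
open SimpleGraph

variable {V : Type*}

/-!
Twins `v, v'` are at the same distance from every third vertex, so a resolving set must contain
one of them, and a weak total resolving set containing one of them must contain the other. Hence
if every vertex has a twin, the only weak total resolving set is `V` itself. Conversely, if `u`
has no twin, then every `v ≠ u` is separated from `u` by some third vertex, so `V - {u}` is a weak
total resolving set.
-/

open Finset

variable {G : SimpleGraph V}

lemma AreTwins.symm {u v : V} (h : AreTwins G u v) : AreTwins G v u :=
  ⟨h.1.symm, h.2.symm⟩

-- The first step `v' → x` of a shortest walk from `v'` to `w` can be replaced by `v → x`,
-- unless `x = v`, in which case the rest of the walk is even shorter.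
lemma AreTwins.dist_le (hG : G.Connected) {v v' w : V} (h : AreTwins G v v')
    (hwv : w ≠ v) (hwv' : w ≠ v') : G.dist v w ≤ G.dist v' w := by
  obtain ⟨p, hp⟩ := hG.exists_walk_length_eq_dist v' w
  cases p with
  | nil => exact absurd rfl hwv'
  | @cons _ x _ hadj q =>
    rw [Walk.length_cons] at hp
    by_cases hx : x = v
    · subst hx
      have := G.dist_le q
      omega
    · have hx' : x ∈ G.neighborSet v \ {v'} := by
        rw [h.2]
        exact ⟨hadj, hx⟩
      have : G.dist v w ≤ q.length + 1 := G.dist_le (Walk.cons hx'.1 q)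
      omega

lemma AreTwins.dist_eq (hG : G.Connected) {v v' w : V} (h : AreTwins G v v')
    (hwv : w ≠ v) (hwv' : w ≠ v') : G.dist v w = G.dist v' w :=
  (h.dist_le hG hwv hwv').antisymm (h.symm.dist_le hG hwv' hwv)

lemma areTwins_of_dist_eq {v v' : V} (hne : v ≠ v')
    (h : ∀ w, w ≠ v → w ≠ v' → G.dist v w = G.dist v' w) : AreTwins G v v' := by
  refine ⟨hne, Set.ext fun x => ?_⟩
  by_cases hxv : x = v
  · subst hxv
    simp
  by_cases hxv' : x = v'
  · subst hxv'
    simp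
  simp only [Set.mem_sdiff, mem_neighborSet, Set.mem_singleton_iff, hxv, hxv', not_false_eq_true,
    and_true, ← dist_eq_one_iff_adj, h x hxv hxv']

lemma SimpleGraph.Connected.isResolvingSet_of_mem_or_mem (hG : G.Connected) {W : Finset V}
    (hW : ∀ u v, u ≠ v → u ∈ W ∨ v ∈ W) : IsResolvingSet G W := by
  intro u v huv
  rcases hW u v huv with hu | hv
  · refine ⟨u, hu, ?_⟩
    rw [dist_self, G.dist_comm]
    exact (hG.pos_dist_of_ne huv).ne
  · refine ⟨v, hv, ?_⟩
    rw [dist_self]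
    exact (hG.pos_dist_of_ne huv).ne'

lemma SimpleGraph.Connected.isWTRSet_univ [Fintype V] (hG : G.Connected) : IsWTRSet G univ :=
  ⟨hG.isResolvingSet_of_mem_or_mem fun u _ _ => .inl (mem_univ u),
    fun _ _ u hu => absurd (mem_univ u) hu⟩

lemma SimpleGraph.Connected.isWTRSet_univ_erase [Fintype V] [DecidableEq V] (hG : G.Connected)
    {u : V} (hu : ∀ v, ¬AreTwins G u v) : IsWTRSet G (univ.erase u) := by
  refine ⟨hG.isResolvingSet_of_mem_or_mem fun a b hab => ?_, fun v hv x hx => ?_⟩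
  · by_cases ha : a = u
    · exact .inr (mem_erase.2 ⟨fun hb => hab (ha.trans hb.symm), mem_univ b⟩)
    · exact .inl (mem_erase.2 ⟨ha, mem_univ a⟩)
  · obtain rfl : x = u := by simpa using hx
    have hvx : v ≠ x := (mem_erase.1 hv).1
    obtain ⟨w, hwx, hwv, hd⟩ : ∃ w, w ≠ x ∧ w ≠ v ∧ G.dist x w ≠ G.dist v w := by
      by_contra! hall
      exact hu v (areTwins_of_dist_eq hvx.symm hall)
    exact ⟨w, mem_erase.2 ⟨hwx, mem_univ w⟩, hwv, hd⟩

lemma eq_univ_of_isWTRSet [Fintype V] (hG : G.Connected) (htw : ∀ u : V, ∃ v, AreTwins G u v)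
    {W : Finset V} (hW : IsWTRSet G W) : W = univ := by
  refine eq_univ_of_forall fun v => by_contra fun hv => ?_
  obtain ⟨v', htwin⟩ := htw v
  have hdist : ∀ w ∈ W, w ≠ v' → G.dist v w = G.dist v' w := fun w hw hwv' =>
    htwin.dist_eq hG (ne_of_mem_of_not_mem hw hv) hwv'
  by_cases hv' : v' ∈ W
  · obtain ⟨w, hw, hwv', hd⟩ := hW.2 v' hv' v hv
    exact hd (hdist w hw hwv')
  · obtain ⟨w, hw, hd⟩ := hW.1 v v' htwin.1
    exact hd (hdist w hw (ne_of_mem_of_not_mem hw hv'))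

lemma wtDim_le {W : Finset V} (hW : IsWTRSet G W) : wtDim G ≤ W.card :=
  Nat.sInf_le ⟨W, rfl, hW⟩

lemma SimpleGraph.Connected.exists_isWTRSet_card_eq_wtDim [Fintype V] (hG : G.Connected) :
    ∃ W : Finset V, W.card = wtDim G ∧ IsWTRSet G W :=
  Nat.sInf_mem (s := {k | ∃ W : Finset V, W.card = k ∧ IsWTRSet G W})
    ⟨_, univ, rfl, hG.isWTRSet_univ⟩

theorem wtDim_eq_card_iff_all_twins_general [Fintype V] (G : SimpleGraph V) (hG : G.Connected) :
    wtDim G = Fintype.card V ↔ ∀ u : V, ∃ v : V, AreTwins G u v := by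
  classical
  constructor
  · intro hdim u
    by_contra! hu
    have hle := wtDim_le (hG.isWTRSet_univ_erase hu)
    have hlt := card_erase_lt_of_mem (mem_univ u)
    rw [card_univ] at hlt
    omega
  · intro htw
    obtain ⟨W, hcard, hW⟩ := hG.exists_isWTRSet_card_eq_wtDim
    rw [← hcard, eq_univ_of_isWTRSet hG htw hW, card_univ]

/-- `dim_wt(G) = n` iff every vertex of `G` is a twin. -/
theorem wtDim_eq_card_iff_all_twins [Fintype V] (G : SimpleGraph V) (hG : G.Connected)
    (hn : 2 ≤ Fintype.card V) :
    wtDim G = Fintype.card V ↔ ∀ u : V, ∃ v : V, AreTwins G u v :=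
  wtDim_eq_card_iff_all_twins_general G hG
end

section
/- For any connected graph G of order n ≥ 3, the weak total resolving number satisfies res_wt(G) ≥ 3; that is, there exists a 2-element subset of V(G) which is not a weak total resolving set. -/
open SimpleGraph

variable {V : Type*}

/-
Weak total resolvability is closed under enlarging the set, so it suffices to find one pair
`{a, b}` that fails. Connectivity and `n ≥ 3` give a path `u - a - b` with `u ∉ {a, b}`. In
`{a, b}`, the only vertex that could tell `u` from `b` apart, other than `b` itself, is `a`, and
`d(u, a) = 1 = d(b, a)`.
-/

section

variable {G : SimpleGraph V} {W W' : Finset V}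

theorem IsResolvingSet.mono (hW : IsResolvingSet G W) (hWW' : W ⊆ W') :
    IsResolvingSet G W' := fun u v huv ↦
  let ⟨w, hw, hd⟩ := hW u v huv
  ⟨w, hWW' hw, hd⟩

theorem IsWTRSet.mono (hW : IsWTRSet G W) (hWW' : W ⊆ W') : IsWTRSet G W' := by
  refine ⟨hW.1.mono hWW', fun v hv u hu ↦ ?_⟩
  by_cases hvW : v ∈ W
  · obtain ⟨w, hw, hwv, hd⟩ := hW.2 v hvW u (fun huW ↦ hu (hWW' huW))
    exact ⟨w, hWW' hw, hwv, hd⟩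
  · obtain ⟨w, hw, hd⟩ := hW.1 u v (ne_of_mem_of_not_mem hv hu).symm
    exact ⟨w, hWW' hw, ne_of_mem_of_not_mem hw hvW, hd⟩

theorem not_isWTRSet_pair [DecidableEq V] {u a b : V} (hua : G.Adj u a) (hab : G.Adj a b)
    (hub : u ≠ b) : ¬ IsWTRSet G {a, b} := by
  rintro ⟨-, hW⟩
  obtain ⟨w, hw, hwb, hd⟩ := hW b (by simp) u (by simp [hua.ne, hub])
  obtain rfl : w = a := by simpa [hwb] using hw
  exact hd (by rw [dist_eq_one_iff_adj.mpr hua, dist_eq_one_iff_adj.mpr hab.symm])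

namespace SimpleGraph

theorem Connected.isResolvingSet_univ [Fintype V] (hG : G.Connected) :
    IsResolvingSet G Finset.univ := fun u v huv ↦
  ⟨u, Finset.mem_univ u, by rw [dist_self]; exact (hG.pos_dist_of_ne huv.symm).ne⟩

theorem Connected.isWTRSet_univ_s11 [Fintype V] (hG : G.Connected) : IsWTRSet G Finset.univ :=
  ⟨hG.isResolvingSet_univ, fun _ _ u hu ↦ absurd (Finset.mem_univ u) hu⟩

theorem Connected.exists_adj_adj_of_three_le_card [Fintype V] (hG : G.Connected)
    (hn : 3 ≤ Fintype.card V) : ∃ u a b, G.Adj u a ∧ G.Adj a b ∧ u ≠ b := by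
  classical
  have : Nontrivial V := Fintype.one_lt_card_iff_nontrivial.mp (by omega)
  obtain ⟨a₀⟩ := hG.nonempty
  obtain ⟨b₀, hab₀⟩ := hG.preconnected.exists_adj_of_nontrivial a₀
  obtain ⟨c, -, hc⟩ := Finset.exists_mem_notMem_of_card_lt_card
    (s := {a₀, b₀}) (t := Finset.univ) (by simpa using (Finset.card_le_two).trans_lt hn)
  -- a walk from `c` to `a₀` must enter `{a₀, b₀}` along some edge
  obtain ⟨d, -, hd₁, hd₂⟩ :=
    (hG c a₀).some.exists_boundary_dart ({a₀, b₀} : Set V)ᶜ (by simpa using hc) (by simp)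
  simp only [Set.mem_compl_iff, Set.mem_insert_iff, Set.mem_singleton_iff, not_or,
    not_and_or, not_not] at hd₁ hd₂
  rcases hd₂ with h | h
  · exact ⟨d.fst, a₀, b₀, h ▸ d.adj, hab₀, hd₁.2⟩
  · exact ⟨d.fst, b₀, a₀, h ▸ d.adj, hab₀.symm, hd₁.1⟩

theorem Connected.exists_card_two_not_isWTRSet [Fintype V] (hG : G.Connected)
    (hn : 3 ≤ Fintype.card V) : ∃ W : Finset V, W.card = 2 ∧ ¬ IsWTRSet G W := by
  classical
  obtain ⟨u, a, b, hua, hab, hub⟩ := hG.exists_adj_adj_of_three_le_card hn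
  exact ⟨{a, b}, Finset.card_pair hab.ne, not_isWTRSet_pair hua hab hub⟩

end SimpleGraph

end

/-- for any connected graph of order `n ≥ 3`, `res_wt(G) ≥ 3`;
that is, some 2-element set of vertices is not a WTR-set. -/
theorem resWt_ge_three [Fintype V] (G : SimpleGraph V) (hG : G.Connected)
    (hn : 3 ≤ Fintype.card V) :
    3 ≤ resWt G ∧ ∃ W : Finset V, W.card = 2 ∧ ¬ IsWTRSet G W := by
  obtain ⟨W, hWcard, hW⟩ := hG.exists_card_two_not_isWTRSet hn
  refine ⟨le_csInf ⟨Fintype.card V, fun U hU ↦ ?_⟩ fun r hr ↦ ?_, W, hWcard, hW⟩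
  · rw [Finset.eq_univ_of_card U hU]
    exact hG.isWTRSet_univ_s11
  · by_contra! hr3
    obtain ⟨U, hUW, hUcard⟩ := Finset.exists_subset_card_eq (s := W) (n := r) (by omega)
    exact hW ((hr U hUcard).mono hUW)
end

section
/- If every k-element subset of V(G) is a weak total resolving set for a connected graph G (i.e., res_wt(G) ≤ k), then every two vertices of G have at most k−2 common neighbors. -/
open SimpleGraph

variable {V : Type*}

/-!
If `u ≠ v` had `k - 1` common neighbours `T`, the `k`-set `W = insert u T` would have to
distinguish `u ∈ W` from `v ∉ W` by some `w ∈ W - {u} = T`; but every such `w` is at distance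
`1` from both.
-/

namespace IsResolvingSet

variable {G : SimpleGraph V} {W : Finset V}

theorem nonempty (hW : IsResolvingSet G W) {u v : V} (huv : u ≠ v) : W.Nonempty :=
  let ⟨w, hw, _⟩ := hW u v huv
  ⟨w, hw⟩

end IsResolvingSet

namespace IsWTRSet

variable [Fintype V] [DecidableEq V] {G : SimpleGraph V} [DecidableRel G.Adj] {W : Finset V}

theorem erase_not_subset_commonNeighbors (hW : IsWTRSet G W) {u v : V} (hu : u ∈ W)
    (hv : v ∉ W) : ¬ W.erase u ⊆ G.neighborFinset u ∩ G.neighborFinset v := by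
  intro hsub
  obtain ⟨w, hwW, hwu, hdist⟩ := hW.2 u hu v hv
  have hw := Finset.mem_inter.1 (hsub (Finset.mem_erase.2 ⟨hwu, hwW⟩))
  simp only [mem_neighborFinset] at hw
  exact hdist (by rw [dist_eq_one_iff_adj.2 hw.1, dist_eq_one_iff_adj.2 hw.2])

end IsWTRSet

theorem common_neighbors_le_general [Fintype V] [DecidableEq V] (G : SimpleGraph V)
    [DecidableRel G.Adj] (k : ℕ)
    (h : ∀ W : Finset V, W.card = k → IsWTRSet G W) :
    ∀ u v : V, u ≠ v → (G.neighborFinset u ∩ G.neighborFinset v).card ≤ k - 2 := by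
  intro u v huv
  have hk : k ≠ 0 := by
    rintro rfl
    exact Finset.not_nonempty_empty ((h ∅ rfl).1.nonempty huv)
  by_contra! hcard
  obtain ⟨T, hTS, hTcard⟩ := Finset.exists_subset_card_eq
    (show k - 1 ≤ (G.neighborFinset u ∩ G.neighborFinset v).card by omega)
  have huT : u ∉ T := fun hu => by simpa using hTS hu
  have hvT : v ∉ T := fun hv => by simpa using hTS hv
  have hWcard : (insert u T).card = k := by
    rw [Finset.card_insert_of_notMem huT, hTcard]
    omega
  have hvW : v ∉ insert u T := by simp [huv.symm, hvT]
  exact (h _ hWcard).erase_not_subset_commonNeighbors (Finset.mem_insert_self u T) hvW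
    (by rwa [Finset.erase_insert huT])

/-- if every `k`-subset of vertices is a WTR-set, then any two distinct
vertices have at most `k - 2` common neighbors. -/
theorem common_neighbors_le [Fintype V] [DecidableEq V] (G : SimpleGraph V)
    [DecidableRel G.Adj] (hG : G.Connected) (k : ℕ)
    (h : ∀ W : Finset V, W.card = k → IsWTRSet G W) :
    ∀ u v : V, u ≠ v → (G.neighborFinset u ∩ G.neighborFinset v).card ≤ k - 2 :=
  common_neighbors_le_general G k h
end

section
/- For a connected graph G of order n ≥ 3, every 3-element subset of V(G) is a weak total resolving set if and only if G is an odd cycle or a path on at least three vertices. Equivalently, res_wt(G) = 3 if and only if G is an odd cycle or a path of order ≥ 3. -/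
open SimpleGraph

variable {V : Type*}

/-!
A 3-set `W` is weak total resolving exactly when every two vertices `x ≠ y` resolve every pair of
vertices outside `{x, y}` (for `v ∈ W` the other two vertices of `W` must separate `v` from `u`).
Three neighbours of one vertex are pairwise at distance 1 or 2, so this property bounds the
degree by two, and a connected graph of maximum degree two is a path or a cycle. In `P_n` and
`C_n` the distances are `|i - j|` and `min |i - j| (n - |i - j|)`; in a path or an odd cycle two
distinct vertices have at most one vertex equidistant from both, whereas in `C_{2k}` the vertices
`1` and `2k - 1` are equidistant from both `0` and `k`. Finally no `r`-set with `r ≤ 2` works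
once some vertex `y` has two neighbours `a ≠ b`, as `{a, y}` does not separate `b` from `a`.
-/

namespace SimpleGraph

variable {V' : Type*} {G : SimpleGraph V} {H : SimpleGraph V'}

lemma Hom.dist_map_le (f : G →g H) {u v : V} (h : G.Reachable u v) :
    H.dist (f u) (f v) ≤ G.dist u v := by
  obtain ⟨p, hp⟩ := h.exists_walk_length_eq_dist
  exact (dist_le (p.map f)).trans (by rw [Walk.length_map, hp])

lemma Iso.dist_map (e : G ≃g H) (u v : V) : H.dist (e u) (e v) = G.dist u v := by
  by_cases h : G.Reachable u v
  · refine le_antisymm (e.toHom.dist_map_le h) ?_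
    simpa using e.symm.toHom.dist_map_le (e.reachable_iff.mpr h)
  · rw [dist_eq_zero_of_not_reachable h, dist_eq_zero_of_not_reachable (e.reachable_iff.not.mpr h)]

lemma Reachable.exists_adj_dist_eq {x u : V} {k : ℕ} (h : G.Reachable x u)
    (hk : G.dist x u = k + 1) : ∃ w, G.Adj w u ∧ G.dist x w = k := by
  obtain ⟨p, hp⟩ := h.symm.exists_walk_length_eq_dist
  rw [dist_comm, hk] at hp
  cases p with
  | nil => simp at hp
  | @cons _ w _ hadj q =>
    have hq : G.dist x w ≤ k := by
      rw [Walk.length_cons, Nat.add_right_cancel_iff] at hp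
      simpa [dist_comm, hp] using dist_le q
    refine ⟨w, hadj.symm, ?_⟩
    rcases hadj.diff_dist_adj (u := x) with h | h | h <;> omega

lemma dist_eq_of_lipschitz_of_exists_pred {f : V → ℕ} {u : V} (hu : f u = 0)
    (hle : ∀ a b, G.Adj a b → f b ≤ f a + 1)
    (hpred : ∀ v, v ≠ u → ∃ w, G.Adj w v ∧ f w + 1 = f v) (v : V) : G.dist u v = f v := by
  have hwalk : ∀ k v, f v = k → ∃ p : G.Walk u v, p.length = k := by
    intro k
    induction k with
    | zero =>
      intro v hv
      obtain rfl | hvu := eq_or_ne v u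
      · exact ⟨.nil, rfl⟩
      · obtain ⟨w, -, hw⟩ := hpred v hvu
        omega
    | succ k ih =>
      intro v hv
      obtain ⟨w, hwv, hw⟩ := hpred v (by rintro rfl; omega)
      obtain ⟨p, hp⟩ := ih w (by omega)
      exact ⟨p.concat hwv, by simp [hp]⟩
  have hlip : ∀ {a b : V} (p : G.Walk a b), f b ≤ f a + p.length := by
    intro a b p
    induction p with
    | nil => simp
    | cons hadj q ih => have := hle _ _ hadj; simp only [Walk.length_cons]; omega
  obtain ⟨p, hp⟩ := hwalk _ v rfl
  obtain ⟨q, hq⟩ := p.reachable.exists_walk_length_eq_dist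
  have := hlip q
  have := dist_le p
  omega

lemma pathGraph_dist {n : ℕ} (i j : Fin n) : (pathGraph n).dist i j = Nat.dist i j := by
  refine dist_eq_of_lipschitz_of_exists_pred (G := pathGraph n) (u := i)
    (f := fun v => Nat.dist i v) (Nat.dist_self _) (fun a b hab => ?_) (fun v hv => ?_) j
  · rw [pathGraph_adj] at hab
    unfold Nat.dist
    omega
  · have hv : v.val ≠ i.val := Fin.val_ne_of_ne hv
    rcases Nat.lt_or_gt_of_ne hv with h | h
    · refine ⟨⟨v + 1, by omega⟩, pathGraph_adj.mpr (by simp), ?_⟩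
      unfold Nat.dist
      simp only
      omega
    · refine ⟨⟨v - 1, by omega⟩, pathGraph_adj.mpr (by simp; omega), ?_⟩
      unfold Nat.dist
      simp only
      omega

lemma pathGraph_add_one_eq_of_subsingleton_neighborSet {n : ℕ} {i : Fin n}
    (hi : ((pathGraph n).neighborSet i).Subsingleton) (h0 : (i : ℕ) ≠ 0) : (i : ℕ) + 1 = n := by
  by_contra hlt
  have hlt : (i : ℕ) + 1 < n := by omega
  have := @hi ⟨i + 1, hlt⟩ (by simp [pathGraph_adj]) ⟨i - 1, by omega⟩
    (by simp [pathGraph_adj]; omega)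
  simp [Fin.ext_iff] at this
  omega

lemma cycleGraph_adj_iff {n : ℕ} {u v : Fin n} :
    (cycleGraph n).Adj u v ↔ u ≠ v ∧ (Nat.dist u v = 1 ∨ Nat.dist u v + 1 = n) := by
  rw [cycleGraph_adj']
  have hu := u.isLt
  have hv := v.isLt
  rcases lt_trichotomy u v with h | rfl | h
  · rw [Fin.coe_sub_iff_lt.mpr h, Fin.sub_val_of_le h.le, Ne, Fin.ext_iff]
    unfold Nat.dist
    omega
  · simp [Fin.sub_val_of_le le_rfl]
  · rw [Fin.coe_sub_iff_lt.mpr h, Fin.sub_val_of_le h.le, Ne, Fin.ext_iff]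
    unfold Nat.dist
    omega

lemma cycleGraph_dist {n : ℕ} (i j : Fin n) :
    (cycleGraph n).dist i j = min (Nat.dist i j) (n - Nat.dist i j) := by
  have hi := i.isLt
  refine dist_eq_of_lipschitz_of_exists_pred (G := cycleGraph n) (u := i)
    (f := fun v => min (Nat.dist i v) (n - Nat.dist i v)) (by simp) (fun a b hab => ?_)
    (fun v hv => ?_) j
  · have := a.isLt
    have := b.isLt
    rw [cycleGraph_adj_iff] at hab
    unfold Nat.dist at *
    omega
  · have hv' := v.isLt
    have hvi : v.val ≠ i.val := Fin.val_ne_of_ne hv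
    obtain ⟨s, hs⟩ : ∃ s : Fin n, v.val + 1 < n ∧ s.val = v.val + 1 ∨ v.val + 1 = n ∧ s.val = 0 :=
      if h : v.val + 1 < n then ⟨⟨v + 1, h⟩, .inl ⟨h, rfl⟩⟩ else ⟨⟨0, by omega⟩, .inr ⟨by omega, rfl⟩⟩
    obtain ⟨p, hp⟩ : ∃ p : Fin n, 0 < v.val ∧ p.val + 1 = v.val ∨ v.val = 0 ∧ p.val + 1 = n :=
      if h : 0 < v.val then ⟨⟨v - 1, by omega⟩, .inl ⟨h, by simp; omega⟩⟩
      else ⟨⟨n - 1, by omega⟩, .inr ⟨by omega, by simp; omega⟩⟩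
    have hsv : (cycleGraph n).Adj s v := by
      rw [cycleGraph_adj_iff, Ne, Fin.ext_iff]; unfold Nat.dist; omega
    have hpv : (cycleGraph n).Adj p v := by
      rw [cycleGraph_adj_iff, Ne, Fin.ext_iff]; unfold Nat.dist; omega
    rcases Nat.lt_or_gt_of_ne hvi with h | h <;> by_cases hd : 2 * Nat.dist i v ≤ n
    · exact ⟨s, hsv, by unfold Nat.dist at *; omega⟩
    · exact ⟨p, hpv, by unfold Nat.dist at *; omega⟩
    · exact ⟨p, hpv, by unfold Nat.dist at *; omega⟩
    · exact ⟨s, hsv, by unfold Nat.dist at *; omega⟩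

lemma adj_iff_deleteEdges_adj_or_eq {x a : V} (h : G.Adj x a) (u v : V) :
    G.Adj u v ↔ (G.deleteEdges {s(x, a)}).Adj u v ∨ s(u, v) = s(x, a) := by
  simp only [deleteEdges_adj, Set.mem_singleton_iff]
  refine ⟨fun huv => ?_, ?_⟩
  · by_cases he : s(u, v) = s(x, a)
    exacts [.inr he, .inl ⟨huv, he⟩]
  · rintro (huv | he)
    · exact huv.1
    · rwa [← mem_edgeSet, he]

lemma Connected.exists_adj_adj_ne [Fintype V] (hG : G.Connected) (hn : 3 ≤ Fintype.card V) :
    ∃ v a b, a ≠ b ∧ G.Adj v a ∧ G.Adj v b := by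
  by_cases hcomplete : ∀ u v, u ≠ v → G.Adj u v
  · obtain ⟨a, b, c, hab, hac, hbc⟩ := Fintype.two_lt_card_iff.mp hn
    exact ⟨a, b, c, hbc, hcomplete _ _ hab, hcomplete _ _ hac⟩
  · push Not at hcomplete
    obtain ⟨u, v, huv, hnadj⟩ := hcomplete
    obtain ⟨p, hp⟩ := hG.exists_walk_length_eq_dist u v
    obtain ⟨x, a, b, hxa, hab, -, hxb⟩ :=
      p.exists_adj_adj_not_adj_ne hp (hG.one_lt_dist_of_ne_of_not_adj huv hnadj)
    exact ⟨a, x, b, hxb, hxa.symm, hab⟩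

def MaxDegreeLeTwo (G : SimpleGraph V) : Prop :=
  ∀ ⦃v a b c : V⦄, G.Adj v a → G.Adj v b → G.Adj v c → a = b ∨ a = c ∨ b = c

namespace MaxDegreeLeTwo

lemma mono {G' : SimpleGraph V} (h : G ≤ G') (hG' : G'.MaxDegreeLeTwo) : G.MaxDegreeLeTwo :=
  fun _ _ _ _ ha hb hc => hG' (h ha) (h hb) (h hc)

lemma isCycles (hdeg : G.MaxDegreeLeTwo) (htwo : ∀ v, (G.neighborSet v).Nontrivial) :
    G.IsCycles := by
  intro v _
  obtain ⟨a, ha, b, hb, hab⟩ := htwo v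
  have : G.neighborSet v = {a, b} := by
    ext c
    refine ⟨fun hc => ?_, by rintro (rfl | rfl) <;> assumption⟩
    rcases hdeg ha hb hc with h | h | h
    exacts [absurd h hab, .inl h.symm, .inr h.symm]
  rw [this, Set.ncard_pair hab]

lemma subsingleton_neighborSet_deleteEdges (hdeg : G.MaxDegreeLeTwo) {x a : V} (h : G.Adj x a) :
    ((G.deleteEdges {s(x, a)}).neighborSet x).Subsingleton := by
  intro c hc d hd
  simp only [mem_neighborSet, deleteEdges_adj, Set.mem_singleton_iff, Sym2.eq_iff, true_and]
    at hc hd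
  rcases hdeg h hc.1 hd.1 with h | h | h
  · exact absurd (.inl h.symm) hc.2
  · exact absurd (.inl h.symm) hd.2
  · exact h

lemma injective_dist (hdeg : G.MaxDegreeLeTwo) (hG : G.Connected) {x : V}
    (hx : (G.neighborSet x).Subsingleton) : Function.Injective (G.dist x) := by
  suffices ∀ k u v, G.dist x u = k → G.dist x v = k → u = v from
    fun u v h => this _ u v rfl h.symm
  intro k
  induction k using Nat.strong_induction_on with
  | _ k ih =>
    intro u v hu hv
    match k with
    | 0 => rw [← hG.dist_eq_zero_iff.mp hu, ← hG.dist_eq_zero_iff.mp hv]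
    | 1 => exact hx (dist_eq_one_iff_adj.mp hu) (dist_eq_one_iff_adj.mp hv)
    | k + 2 =>
      obtain ⟨w, hwu, hw⟩ := (hG x u).exists_adj_dist_eq hu
      obtain ⟨w', hwv, hw'⟩ := (hG x v).exists_adj_dist_eq hv
      obtain rfl := ih (k + 1) (by omega) w w' hw hw'
      obtain ⟨z, hzw, hz⟩ := (hG x w).exists_adj_dist_eq hw
      rcases hdeg hwu hwv hzw.symm with h | rfl | rfl
      · exact h
      · omega
      · omega

lemma exists_iso_pathGraph [Fintype V] (hdeg : G.MaxDegreeLeTwo) (hG : G.Connected) {x : V}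
    (hx : (G.neighborSet x).Subsingleton) :
    ∃ e : G ≃g pathGraph (Fintype.card V), ∀ u, (e u : ℕ) = G.dist x u := by
  classical
  have hlt : ∀ u, G.dist x u < Fintype.card V := fun u => by
    obtain ⟨p, hp, hl⟩ := hG.exists_path_of_dist x u
    exact hl ▸ hp.length_lt
  let f : V → Fin (Fintype.card V) := fun u => ⟨G.dist x u, hlt u⟩
  have hinj : Function.Injective f := fun u v h => hdeg.injective_dist hG hx (Fin.val_eq_of_eq h)
  have hstep : ∀ {u v}, G.dist x u + 1 = G.dist x v → G.Adj u v := fun {u v} h => by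
    obtain ⟨w, hwv, hw⟩ := (hG x v).exists_adj_dist_eq h.symm
    rwa [← hdeg.injective_dist hG hx hw]
  refine ⟨⟨Equiv.ofBijective f ((Fintype.bijective_iff_injective_and_card f).mpr
    ⟨hinj, by simp⟩), fun {u v} => ?_⟩, fun _ => rfl⟩
  simp only [Equiv.ofBijective_apply, pathGraph_adj, f]
  refine ⟨fun h => h.elim hstep (fun h => (hstep h).symm), fun huv => ?_⟩
  have hne : G.dist x u ≠ G.dist x v := (hdeg.injective_dist hG hx).ne huv.ne
  rcases huv.diff_dist_adj (u := x) with h | h | h <;> omega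

/-- Deleting an edge `xa` of a connected 2-regular graph leaves a path from `x` to `a`, and the
deleted edge closes it into a cycle. -/
lemma nonempty_iso_cycleGraph [Fintype V] (hdeg : G.MaxDegreeLeTwo) (hG : G.Connected)
    (htwo : ∀ v, (G.neighborSet v).Nontrivial) :
    Nonempty (G ≃g cycleGraph (Fintype.card V)) := by
  obtain ⟨x⟩ := hG.nonempty
  obtain ⟨a, ha, -⟩ := htwo x
  have ha : G.Adj x a := ha
  set G' := G.deleteEdges {s(x, a)}
  have hG' : G'.Connected := hG.connected_delete_edge_of_not_isBridge <| by
    rw [isBridge_iff, not_not]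
    exact (hdeg.isCycles htwo).reachable_deleteEdges ha
  obtain ⟨e, he⟩ := (hdeg.mono (deleteEdges_le _)).exists_iso_pathGraph hG'
    (hdeg.subsingleton_neighborSet_deleteEdges ha)
  have hx : ∀ w, w = x ↔ (e w : ℕ) = 0 := fun w => by
    rw [← e.injective.eq_iff, Fin.ext_iff, he x, dist_self]
  have ha0 : (e a : ℕ) ≠ 0 := (hx a).not.mp ha.ne'
  have hea : (e a : ℕ) + 1 = Fintype.card V := by
    refine pathGraph_add_one_eq_of_subsingleton_neighborSet (fun j hj k hk => ?_) ha0
    have hsub : (G'.neighborSet a).Subsingleton := by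
      simpa only [G', Sym2.eq_swap] using hdeg.subsingleton_neighborSet_deleteEdges ha.symm
    have hj' := e.symm.map_adj_iff.mpr hj
    have hk' := e.symm.map_adj_iff.mpr hk
    rw [e.symm_apply_apply] at hj' hk'
    exact e.symm.injective (hsub hj' hk')
  have ha' : ∀ w, w = a ↔ (e w : ℕ) + 1 = Fintype.card V := fun w => by
    rw [← e.injective.eq_iff, Fin.ext_iff]; omega
  refine ⟨⟨e.toEquiv, fun {u v} => ?_⟩⟩
  change (cycleGraph _).Adj (e u) (e v) ↔ G.Adj u v
  rw [adj_iff_deleteEdges_adj_or_eq ha, ← e.map_adj_iff, pathGraph_adj, cycleGraph_adj_iff,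
    Sym2.eq_iff]
  simp only [hx, ha', Ne, Fin.ext_iff]
  have := (e u).isLt
  have := (e v).isLt
  unfold Nat.dist
  constructor <;> intro h <;> omega

end MaxDegreeLeTwo

lemma Connected.nonempty_iso_pathGraph_or_cycleGraph [Fintype V] (hG : G.Connected)
    (hdeg : G.MaxDegreeLeTwo) :
    Nonempty (G ≃g pathGraph (Fintype.card V)) ∨ Nonempty (G ≃g cycleGraph (Fintype.card V)) := by
  by_cases hleaf : ∃ x, (G.neighborSet x).Subsingleton
  · obtain ⟨x, hx⟩ := hleaf
    obtain ⟨e, -⟩ := hdeg.exists_iso_pathGraph hG hx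
    exact .inl ⟨e⟩
  · push Not at hleaf
    exact .inr (hdeg.nonempty_iso_cycleGraph hG hleaf)

end SimpleGraph

open SimpleGraph

variable {V' : Type*} {G : SimpleGraph V} {H : SimpleGraph V'}

def PairsResolveOutside (G : SimpleGraph V) : Prop :=
  ∀ ⦃x y u v : V⦄, x ≠ y → u ≠ v → u ≠ x → u ≠ y → v ≠ x → v ≠ y →
    G.dist u x ≠ G.dist v x ∨ G.dist u y ≠ G.dist v y

lemma PairsResolveOutside.of_iso (e : G ≃g H) (h : PairsResolveOutside H) :
    PairsResolveOutside G := by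
  intro x y u v hxy huv hux huy hvx hvy
  simpa only [e.dist_map] using h (e.injective.ne hxy) (e.injective.ne huv) (e.injective.ne hux)
    (e.injective.ne huy) (e.injective.ne hvx) (e.injective.ne hvy)

lemma pairsResolveOutside_pathGraph (n : ℕ) : PairsResolveOutside (pathGraph n) := by
  intro x y u v hxy huv _ _ _ _
  rw [Ne, Fin.ext_iff] at hxy huv
  simp only [pathGraph_dist]
  unfold Nat.dist
  omega

lemma pairsResolveOutside_cycleGraph_of_odd {n : ℕ} (hn : Odd n) :
    PairsResolveOutside (cycleGraph n) := by
  intro x y u v hxy huv _ _ _ _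
  rw [Ne, Fin.ext_iff] at hxy huv
  obtain ⟨k, rfl⟩ := hn
  have := x.isLt; have := y.isLt; have := u.isLt; have := v.isLt
  simp only [cycleGraph_dist]
  unfold Nat.dist
  omega

lemma not_pairsResolveOutside_cycleGraph_of_even {n : ℕ} (hn : 4 ≤ n) (he : Even n) :
    ¬ PairsResolveOutside (cycleGraph n) := by
  obtain ⟨k, rfl⟩ := he
  have hne : ∀ a b : Fin (k + k), a.val ≠ b.val → a ≠ b := fun _ _ h => Fin.val_ne_iff.mp h
  intro h
  have := h (x := ⟨0, by omega⟩) (y := ⟨k, by omega⟩) (u := ⟨1, by omega⟩)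
    (v := ⟨k + k - 1, by omega⟩) (hne _ _ (by simp; omega)) (hne _ _ (by simp; omega))
    (hne _ _ (by simp)) (hne _ _ (by simp; omega)) (hne _ _ (by simp; omega))
    (hne _ _ (by simp; omega))
  simp only [cycleGraph_dist] at this
  unfold Nat.dist at this
  omega

lemma PairsResolveOutside.maxDegreeLeTwo (h : PairsResolveOutside G) : G.MaxDegreeLeTwo := by
  intro v a b c ha hb hc
  by_contra! hne
  obtain ⟨hab, hac, hbc⟩ := hne
  have hdist : ∀ {p q : V}, G.Adj v p → G.Adj v q → p ≠ q → 1 ≤ G.dist p q ∧ G.dist p q ≤ 2 := by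
    intro p q hp hq hpq
    exact ⟨(hp.symm.reachable.trans hq.reachable).pos_dist_of_ne hpq,
      by simpa using dist_le ((Walk.nil.cons hq).cons hp.symm)⟩
  have hva : G.dist a v = 1 := by rw [dist_comm, dist_eq_one_iff_adj.mpr ha]
  have hvb : G.dist b v = 1 := by rw [dist_comm, dist_eq_one_iff_adj.mpr hb]
  have hvc : G.dist c v = 1 := by rw [dist_comm, dist_eq_one_iff_adj.mpr hc]
  have h1 := h hc.ne hab ha.ne' hac hb.ne' hbc
  have h2 := h hb.ne hac ha.ne' hab hc.ne' hbc.symm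
  have h3 := h ha.ne hbc hb.ne' hab.symm hc.ne' hac.symm
  have := hdist ha hb hab
  have := hdist ha hc hac
  have := hdist hb hc hbc
  rw [dist_comm (u := c) (v := a), dist_comm (u := c) (v := b), dist_comm (u := b) (v := a)] at *
  omega

lemma pairsResolveOutside_iff [Fintype V] (hG : G.Connected) (hn : 3 ≤ Fintype.card V) :
    PairsResolveOutside G ↔
      (∃ n : ℕ, Odd n ∧ Nonempty (G ≃g cycleGraph n)) ∨
        (∃ n : ℕ, 3 ≤ n ∧ Nonempty (G ≃g pathGraph n)) := by
  constructor
  · intro h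
    rcases hG.nonempty_iso_pathGraph_or_cycleGraph h.maxDegreeLeTwo with ⟨⟨e⟩⟩ | ⟨⟨e⟩⟩
    · exact .inr ⟨_, hn, ⟨e⟩⟩
    · rcases Nat.even_or_odd (Fintype.card V) with he | ho
      · refine absurd (h.of_iso e.symm) (not_pairsResolveOutside_cycleGraph_of_even ?_ he)
        obtain ⟨k, hk⟩ := he
        omega
      · exact .inl ⟨_, ho, ⟨e⟩⟩
  · rintro (⟨n, hodd, ⟨e⟩⟩ | ⟨n, -, ⟨e⟩⟩)
    · exact (pairsResolveOutside_cycleGraph_of_odd hodd).of_iso e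
    · exact (pairsResolveOutside_pathGraph n).of_iso e

lemma PairsResolveOutside.isWTRSet (h : PairsResolveOutside G) (hG : G.Connected)
    {W : Finset V} (hW : 3 ≤ W.card) : IsWTRSet G W := by
  classical
  refine ⟨fun u v huv => ?_, fun v hv u hu => ?_⟩
  · by_cases hu : u ∈ W
    · exact ⟨u, hu, by rw [dist_self]; exact (hG.pos_dist_of_ne huv.symm).ne⟩
    by_cases hv : v ∈ W
    · exact ⟨v, hv, by rw [dist_self]; exact (hG.pos_dist_of_ne huv).ne'⟩
    obtain ⟨x, hx, y, hy, hxy⟩ := Finset.one_lt_card.mp (by omega : 1 < W.card)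
    rcases h hxy huv (ne_of_mem_of_not_mem hx hu).symm (ne_of_mem_of_not_mem hy hu).symm
      (ne_of_mem_of_not_mem hx hv).symm (ne_of_mem_of_not_mem hy hv).symm with hne | hne
    exacts [⟨x, hx, hne⟩, ⟨y, hy, hne⟩]
  · obtain ⟨x, hx, y, hy, hxy⟩ := Finset.one_lt_card.mp
      (by rw [Finset.card_erase_of_mem hv]; omega : 1 < (W.erase v).card)
    rw [Finset.mem_erase] at hx hy
    rcases h hxy (ne_of_mem_of_not_mem hv hu).symm (ne_of_mem_of_not_mem hx.2 hu).symm
      (ne_of_mem_of_not_mem hy.2 hu).symm hx.1.symm hy.1.symm with hne | hne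
    exacts [⟨x, hx.2, hx.1, hne⟩, ⟨y, hy.2, hy.1, hne⟩]

lemma pairsResolveOutside_of_forall_card_eq_three
    (h : ∀ W : Finset V, W.card = 3 → IsWTRSet G W) : PairsResolveOutside G := by
  classical
  intro x y u v hxy huv hux huy hvx hvy
  obtain ⟨-, hW⟩ := h {v, x, y} (Finset.card_eq_three.mpr ⟨v, x, y, hvx, hvy, hxy, rfl⟩)
  obtain ⟨w, hw, hwv, hne⟩ := hW v (by simp) u (by simp [huv, hux, huy])
  simp only [Finset.mem_insert, Finset.mem_singleton] at hw
  rcases hw with rfl | rfl | rfl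
  exacts [absurd rfl hwv, .inl hne, .inr hne]

lemma forall_card_eq_three_isWTRSet_iff (hG : G.Connected) :
    (∀ W : Finset V, W.card = 3 → IsWTRSet G W) ↔ PairsResolveOutside G :=
  ⟨pairsResolveOutside_of_forall_card_eq_three, fun h _ hW => h.isWTRSet hG hW.ge⟩

lemma resWt_eq_iff {r : ℕ} (hr : r ≠ 0)
    (hlt : ∀ s < r, ¬ ∀ W : Finset V, W.card = s → IsWTRSet G W) :
    resWt G = r ↔ ∀ W : Finset V, W.card = r → IsWTRSet G W := by
  refine ⟨fun h => ?_, fun h => le_antisymm (Nat.sInf_le h) ?_⟩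
  · rcases Set.eq_empty_or_nonempty {r | ∀ W : Finset V, W.card = r → IsWTRSet G W} with he | hne
    · rw [resWt, he, Nat.sInf_empty] at h
      exact absurd h.symm hr
    · exact h ▸ Nat.sInf_mem hne
  · exact le_csInf ⟨r, h⟩ fun s hs => not_lt.mp fun hsr => hlt s hsr hs

lemma not_forall_card_eq_isWTRSet_of_lt_three [Fintype V] (hG : G.Connected)
    (hn : 3 ≤ Fintype.card V) {s : ℕ} (hs : s < 3) :
    ¬ ∀ W : Finset V, W.card = s → IsWTRSet G W := by
  classical
  have : Nontrivial V := Fintype.one_lt_card_iff_nontrivial.mp (by omega)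
  intro h
  interval_cases s
  · obtain ⟨u, v, huv⟩ := exists_pair_ne V
    obtain ⟨w, hw, -⟩ := (h ∅ rfl).1 u v huv
    simp at hw
  · obtain ⟨u, v, huv⟩ := exists_pair_ne V
    obtain ⟨w, hw, hwu, -⟩ := (h {u} (Finset.card_singleton u)).2 u (by simp) v (by simp [huv.symm])
    exact hwu (Finset.mem_singleton.mp hw)
  · obtain ⟨y, a, b, hab, hya, hyb⟩ := hG.exists_adj_adj_ne hn
    obtain ⟨w, hw, hwa, hne⟩ := (h {a, y} (Finset.card_pair hya.ne.symm)).2 a (by simp) b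
      (by simp [hab.symm, hyb.ne.symm])
    obtain rfl : w = y := by simpa [hwa] using hw
    exact hne (by rw [dist_comm, dist_eq_one_iff_adj.mpr hyb, dist_comm, dist_eq_one_iff_adj.mpr hya])

/-- every 3-subset of vertices is a WTR-set iff `G` is an odd cycle or a
path of order ≥ 3; equivalently, `res_wt(G) = 3` iff `G` is an odd cycle or such a path. -/
theorem resWt_eq_three_iff [Fintype V] (G : SimpleGraph V) (hG : G.Connected)
    (hn : 3 ≤ Fintype.card V) :
    ((∀ W : Finset V, W.card = 3 → IsWTRSet G W) ↔
      ((∃ n : ℕ, Odd n ∧ Nonempty (G ≃g cycleGraph n)) ∨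
        (∃ n : ℕ, 3 ≤ n ∧ Nonempty (G ≃g pathGraph n)))) ∧
    (resWt G = 3 ↔
      ((∃ n : ℕ, Odd n ∧ Nonempty (G ≃g cycleGraph n)) ∨
        (∃ n : ℕ, 3 ≤ n ∧ Nonempty (G ≃g pathGraph n)))) := by
  have hthree := (forall_card_eq_three_isWTRSet_iff hG).trans (pairsResolveOutside_iff hG hn)
  exact ⟨hthree, (resWt_eq_iff three_ne_zero
    fun _ hs => not_forall_card_eq_isWTRSet_of_lt_three hG hn hs).trans hthree⟩
end
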